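/- For any measurable $\phi$ with $0 \le \phi \le 1$ and $\int_X \phi\,d\mu = a$, and any measurable set $D$ with $\mu(D) = a$ satisfying $\{f < s\} \subset D \subset \{f \le s\}$ for some $s \ge 0$, one has $\int_D f\,d\mu \le \int_X \phi f\,d\mu$. -/

import Mathlib

/-!
Compare `φ` with the indicator of `D` against the weight `f - s`: on `D` we have `f ≤ s` and
`φ ≤ 1`, off `D` we have `f ≥ s` and `φ ≥ 0`, so `1_D (f - s) ≤ φ (f - s)` pointwise. Integrating,
`∫_D f - s μ(D) ≤ ∫ φ f - s ∫ φ`, and the terms with `s` cancel because `μ(D) = a = ∫ φ`.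
-/

open MeasureTheory

section Bathtub

variable {X : Type*} {f φ : X → ℝ} {s : ℝ} {D : Set X}

lemma indicator_sub_le_mul_sub (hφ0 : ∀ x, 0 ≤ φ x) (hφ1 : ∀ x, φ x ≤ 1)
    (hD1 : {x | f x < s} ⊆ D) (hD2 : D ⊆ {x | f x ≤ s}) (x : X) :
    D.indicator (fun x => f x - s) x ≤ φ x * (f x - s) := by
  by_cases hx : x ∈ D
  · have hfs : f x ≤ s := hD2 hx
    rw [Set.indicator_of_mem hx]
    nlinarith [hφ1 x]
  · have hsf : s ≤ f x := not_lt.mp fun h => hx (hD1 h)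
    rw [Set.indicator_of_notMem hx]
    exact mul_nonneg (hφ0 x) (sub_nonneg.mpr hsf)

variable [MeasurableSpace X] {μ : Measure X}

lemma MeasureTheory.Integrable.unitInterval_mul (hf : Integrable f μ) (hφmeas : Measurable φ)
    (hφ0 : ∀ x, 0 ≤ φ x) (hφ1 : ∀ x, φ x ≤ 1) : Integrable (fun x => φ x * f x) μ :=
  hf.bdd_mul hφmeas.aestronglyMeasurable
    (.of_forall fun x => by rw [Real.norm_of_nonneg (hφ0 x)]; exact hφ1 x)

variable [IsFiniteMeasure μ]

lemma setIntegral_sub_le_integral_mul_sub (hf : Integrable f μ) (hφmeas : Measurable φ)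
    (hφ0 : ∀ x, 0 ≤ φ x) (hφ1 : ∀ x, φ x ≤ 1) (hD : MeasurableSet D)
    (hD1 : {x | f x < s} ⊆ D) (hD2 : D ⊆ {x | f x ≤ s}) :
    ∫ x in D, (f x - s) ∂μ ≤ ∫ x, φ x * (f x - s) ∂μ := by
  have hfs : Integrable (fun x => f x - s) μ := hf.sub (integrable_const s)
  rw [← integral_indicator hD]
  exact integral_mono (hfs.indicator hD)
    (hfs.unitInterval_mul hφmeas hφ0 hφ1)
    (indicator_sub_le_mul_sub hφ0 hφ1 hD1 hD2)

end Bathtub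

theorem stmt6_general {X : Type*} [MeasurableSpace X] (μ : Measure X) [IsFiniteMeasure μ]
    (f : X → ℝ) (hfint : Integrable f μ)
    (a : ℝ) (ha0 : 0 ≤ a)
    (s : ℝ)
    (φ : X → ℝ) (hφmeas : Measurable φ) (hφ0 : ∀ x, 0 ≤ φ x) (hφ1 : ∀ x, φ x ≤ 1)
    (hφint : (∫ x, φ x ∂μ) = a)
    (D : Set X) (hDmeas : MeasurableSet D) (hDa : μ D = ENNReal.ofReal a)
    (hD1 : {x | f x < s} ⊆ D) (hD2 : D ⊆ {x | f x ≤ s}) :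
    (∫ x in D, f x ∂μ) ≤ ∫ x, φ x * f x ∂μ := by
  have hμD : μ.real D = a := by rw [Measure.real, hDa, ENNReal.toReal_ofReal ha0]
  have hφ : Integrable φ μ := by
    simpa using (integrable_const (1 : ℝ)).unitInterval_mul hφmeas hφ0 hφ1
  have key := setIntegral_sub_le_integral_mul_sub hfint hφmeas hφ0 hφ1 hDmeas hD1 hD2
  simp only [mul_sub] at key
  rw [integral_sub hfint.integrableOn (integrable_const s),
    integral_sub (hfint.unitInterval_mul hφmeas hφ0 hφ1) (hφ.mul_const s),
    setIntegral_const, integral_mul_const, hμD, hφint, smul_eq_mul] at key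
  linarith

/-- inequality half of the bathtub principle: for any measurable `φ`
with `0 ≤ φ ≤ 1` and `∫ φ dμ = a`, and any measurable `D` with `μ(D) = a` and
`{f < s} ⊆ D ⊆ {f ≤ s}` for some `s ≥ 0`, one has `∫_D f dμ ≤ ∫ φ f dμ`. -/
theorem stmt6 {X : Type*} [MeasurableSpace X] (μ : Measure X) [IsFiniteMeasure μ]
    (f : X → ℝ) (hfmeas : Measurable f) (hf0 : ∀ x, 0 ≤ f x) (hfint : Integrable f μ)
    (a : ℝ) (ha0 : 0 ≤ a) (ha : ENNReal.ofReal a ≤ μ Set.univ)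
    (s : ℝ) (hs : 0 ≤ s)
    (φ : X → ℝ) (hφmeas : Measurable φ) (hφ0 : ∀ x, 0 ≤ φ x) (hφ1 : ∀ x, φ x ≤ 1)
    (hφint : (∫ x, φ x ∂μ) = a)
    (D : Set X) (hDmeas : MeasurableSet D) (hDa : μ D = ENNReal.ofReal a)
    (hD1 : {x | f x < s} ⊆ D) (hD2 : D ⊆ {x | f x ≤ s}) :
    (∫ x in D, f x ∂μ) ≤ ∫ x, φ x * f x ∂μ :=
  stmt6_general μ f hfint a ha0 s φ hφmeas hφ0 hφ1 hφint D hDmeas hDa hD1 hD2
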